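/- arXiv:2503.08279 — 3 statements merged into one kernel-verified Lean document; each statement's English description precedes it below -/
import Mathlib

section
/- Let κ : [0, ∞) → [0, ∞) be continuous, non-increasing, with b₀ := ∫_0^∞ t κ(t) dt < ∞. Let j : [0, ∞) → ℝ solve j'' = κ j with j(0) = 0, j'(0) = 1 and j > 0 on (0, ∞). Then j(t) ≤ e^{b₀} t for all t ≥ 0. -/
/-!
Since `j ≥ 0`, `j'' = κ j ≥ 0`, so `j` is convex and `j t ≤ t j' t`. Hence
`j'' = κ j ≤ t κ(t) j'`, and Gronwall's inequality gives
`j' t ≤ exp (∫_0^t s κ(s) ds) ≤ exp b₀`; integrating once more yields `j t ≤ exp b₀ · t`.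
-/

open MeasureTheory Set

theorem sub_le_mul_sub_of_hasDerivAt_le {f f' : ℝ → ℝ} {a b C : ℝ} (hab : a ≤ b)
    (hf : ∀ x ∈ Icc a b, HasDerivAt f (f' x) x) (hC : ∀ x ∈ Ioo a b, f' x ≤ C) :
    f b - f a ≤ C * (b - a) := by
  refine (convex_Icc a b).image_sub_le_mul_sub_of_deriv_le
    (fun x hx => (hf x hx).continuousAt.continuousWithinAt)
    (fun x hx => (hf x (interior_subset hx)).differentiableAt.differentiableWithinAt)
    (fun x hx => ?_) a (left_mem_Icc.2 hab) b (right_mem_Icc.2 hab) hab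
  rw [interior_Icc] at hx
  rw [(hf x (Ioo_subset_Icc_self hx)).deriv]
  exact hC x hx

theorem hasDerivAt_integral_of_continuousOn_Ici {g : ℝ → ℝ} {a x : ℝ}
    (hg : ContinuousOn g (Ici a)) (hx : a < x) :
    HasDerivAt (fun y => ∫ s in a..y, g s) (g x) x := by
  have hg' : ContinuousOn g (Ioi a) := hg.mono Ioi_subset_Ici_self
  refine intervalIntegral.integral_hasDerivAt_right ?_
    (hg'.stronglyMeasurableAtFilter isOpen_Ioi x hx) (hg'.continuousAt (Ioi_mem_nhds hx))
  exact (hg.mono (uIcc_of_le hx.le ▸ Icc_subset_Ici_self)).intervalIntegrable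

theorem intervalIntegral_le_setIntegral_Ici {g : ℝ → ℝ} {a x : ℝ}
    (hg : IntegrableOn g (Ici a)) (hg₀ : ∀ s ∈ Ici a, 0 ≤ g s) (hx : a ≤ x) :
    ∫ s in a..x, g s ≤ ∫ s in Ici a, g s := by
  rw [intervalIntegral.integral_of_le hx]
  refine setIntegral_mono_set hg ?_ (Ioc_subset_Ioi_self.trans Ioi_subset_Ici_self).eventuallyLE
  filter_upwards [ae_restrict_mem measurableSet_Ici] with s hs using hg₀ s hs

theorem le_mul_exp_integral_of_hasDerivAt_le {u u' g : ℝ → ℝ} {a : ℝ}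
    (hg : ContinuousOn g (Ici a)) (hu : ∀ x ∈ Ici a, HasDerivAt u (u' x) x)
    (hle : ∀ x ∈ Ioi a, u' x ≤ g x * u x) :
    ∀ x ∈ Ici a, u x ≤ u a * Real.exp (∫ s in a..x, g s) := by
  intro x hx
  set G : ℝ → ℝ := fun y => ∫ s in a..y, g s
  have hsub : Icc a x ⊆ Ici a := Icc_subset_Ici_self
  have hG : ContinuousOn G (Icc a x) := by
    rw [← uIcc_of_le (mem_Ici.1 hx)]
    exact intervalIntegral.continuousOn_primitive_interval
      ((hg.mono (uIcc_of_le (mem_Ici.1 hx) ▸ hsub)).integrableOn_compact isCompact_uIcc)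
  have hanti : AntitoneOn (fun y => u y * Real.exp (-G y)) (Icc a x) := by
    refine antitoneOn_of_hasDerivWithinAt_nonpos (convex_Icc a x)
      (f' := fun y => (u' y - g y * u y) * Real.exp (-G y))
      ((show ContinuousOn u (Icc a x) from fun y hy =>
        (hu y (hsub hy)).continuousAt.continuousWithinAt).mul hG.neg.rexp)
      (fun y hy => ?_) (fun y hy => ?_) <;> rw [interior_Icc] at hy
    · have hexp : HasDerivAt (fun z => Real.exp (-G z)) (Real.exp (-G y) * -g y) y :=
        (hasDerivAt_integral_of_continuousOn_Ici hg hy.1).fun_neg.exp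
      refine (((hu y (hsub (Ioo_subset_Icc_self hy))).fun_mul hexp).congr_deriv ?_).hasDerivWithinAt
      ring
    · exact mul_nonpos_of_nonpos_of_nonneg (sub_nonpos.2 (hle y hy.1)) (Real.exp_pos _).le
  have h := hanti (left_mem_Icc.2 hx) (right_mem_Icc.2 hx) hx
  simp only [G, intervalIntegral.integral_same, neg_zero, Real.exp_zero, mul_one] at h
  rwa [Real.exp_neg, ← div_eq_mul_inv, div_le_iff₀ (Real.exp_pos _)] at h

theorem stmt2_general (κ j j' : ℝ → ℝ)
    (hκcont : ContinuousOn κ (Set.Ici 0))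
    (hκnonneg : ∀ t, 0 ≤ t → 0 ≤ κ t)
    (hκint : IntegrableOn (fun t => t * κ t) (Set.Ici 0))
    (hj : ∀ t ∈ Set.Ici (0:ℝ), HasDerivAt j (j' t) t)
    (hj' : ∀ t ∈ Set.Ici (0:ℝ), HasDerivAt j' (κ t * j t) t)
    (hj0 : j 0 = 0) (hj'0 : j' 0 = 1)
    (hjpos : ∀ t : ℝ, 0 < t → 0 < j t) :
    ∀ t : ℝ, 0 ≤ t → j t ≤ Real.exp (∫ s in Set.Ici (0:ℝ), s * κ s) * t := by
  have hj_nonneg : ∀ t ∈ Ici (0:ℝ), 0 ≤ j t := fun t ht =>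
    (mem_Ici.1 ht).eq_or_lt.elim (fun h => h ▸ hj0.ge) (fun h => (hjpos t h).le)
  have hj'_mono : MonotoneOn j' (Ici 0) :=
    monotoneOn_of_hasDerivWithinAt_nonneg (convex_Ici 0)
      (fun t ht => (hj' t ht).continuousAt.continuousWithinAt)
      (fun t ht => (hj' t (interior_subset ht)).hasDerivWithinAt)
      (fun t ht => mul_nonneg (hκnonneg t (interior_subset ht)) (hj_nonneg t (interior_subset ht)))
  have hj_le : ∀ t ∈ Ici (0:ℝ), j t ≤ t * j' t := fun t ht => by
    have := sub_le_mul_sub_of_hasDerivAt_le (mem_Ici.1 ht) (fun s hs => hj s hs.1)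
      (fun s hs => hj'_mono hs.1.le ht hs.2.le)
    linarith
  have hj'_le : ∀ t ∈ Ici (0:ℝ), j' t ≤ Real.exp (∫ s in Set.Ici (0:ℝ), s * κ s) := fun t ht => by
    have hgronwall := le_mul_exp_integral_of_hasDerivAt_le (g := fun s => s * κ s)
      (continuousOn_id.mul hκcont) hj'
      (fun s hs => by
        have := mul_le_mul_of_nonneg_left (hj_le s (Ioi_subset_Ici_self hs)) (hκnonneg s hs.le)
        linarith) t ht
    rw [hj'0, one_mul] at hgronwall
    exact hgronwall.trans (Real.exp_le_exp.2 (intervalIntegral_le_setIntegral_Ici hκint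
      (fun s hs => mul_nonneg hs (hκnonneg s hs)) ht))
  intro t ht
  have := sub_le_mul_sub_of_hasDerivAt_le ht (fun s hs => hj s hs.1)
    (fun s hs => hj'_le s hs.1.le)
  simpa only [hj0, sub_zero] using this

/-- if `κ : [0,∞) → [0,∞)` is continuous, non-increasing with finite
first moment `b₀ = ∫_0^∞ t κ(t) dt`, and `j` solves `j'' = κ j`, `j(0)=0`, `j'(0)=1`,
`j > 0` on `(0,∞)`, then `j(t) ≤ e^{b₀} t` for all `t ≥ 0`. -/
theorem stmt2 (κ j j' : ℝ → ℝ)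
    (hκcont : ContinuousOn κ (Set.Ici 0))
    (hκmono : AntitoneOn κ (Set.Ici 0))
    (hκnonneg : ∀ t, 0 ≤ t → 0 ≤ κ t)
    (hκint : IntegrableOn (fun t => t * κ t) (Set.Ici 0))
    (hj : ∀ t ∈ Set.Ici (0:ℝ), HasDerivAt j (j' t) t)
    (hj' : ∀ t ∈ Set.Ici (0:ℝ), HasDerivAt j' (κ t * j t) t)
    (hj0 : j 0 = 0) (hj'0 : j' 0 = 1)
    (hjpos : ∀ t : ℝ, 0 < t → 0 < j t) :
    ∀ t : ℝ, 0 ≤ t → j t ≤ Real.exp (∫ s in Set.Ici (0:ℝ), s * κ s) * t :=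
  stmt2_general κ j j' hκcont hκnonneg hκint hj hj' hj0 hj'0 hjpos
end

section
/- Let κ : [0, ∞) → [0, ∞) be continuous, non-increasing, with κ(t) = o(t^{-2}) as t → ∞. Let σ : [0, ∞) → ℝ solve σ'' = κ σ with σ(0) = 0, σ'(0) = 1. Then lim_{t→∞} t σ'(t)/σ(t) = 1. -/
/-!
Since `κ ≥ 0`, the derivative `σ'` cannot drop below `σ'(0) = 1` before `σ` changes sign, so
`σ' ≥ 1` and `σ(t) ≥ t → ∞`. Then `w(t) = t σ'(t) - σ(t)` has `w' = t κ σ ≥ 0` and `w(0) = 0`,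
so `σ ≤ t σ'` and `w' ≤ t² κ σ' = o(σ')`. L'Hôpital's rule in the form `∞ / ∞` gives `w = o(σ)`,
that is `t σ' / σ = 1 + w / σ → 1`.
-/

open Filter Asymptotics Set

theorem monotoneOn_of_hasDerivAt_nonneg {D : Set ℝ} (hD : Convex ℝ D) {f f' : ℝ → ℝ}
    (hf : ∀ x ∈ D, HasDerivAt f (f' x) x) (hf'₀ : ∀ x ∈ interior D, 0 ≤ f' x) :
    MonotoneOn f D :=
  monotoneOn_of_hasDerivWithinAt_nonneg hD (fun x hx ↦ (hf x hx).continuousAt.continuousWithinAt)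
    (fun x hx ↦ (hf x (interior_subset hx)).hasDerivWithinAt) hf'₀

theorem isLittleO_atTop_of_isLittleO_deriv {f g f' g' : ℝ → ℝ}
    (hf : ∀ᶠ t in atTop, HasDerivAt f (f' t) t) (hg : ∀ᶠ t in atTop, HasDerivAt g (g' t) t)
    (hg' : ∀ᶠ t in atTop, 0 ≤ g' t) (hg_top : Tendsto g atTop atTop) (h : f' =o[atTop] g') :
    f =o[atTop] g := by
  refine IsLittleO.of_bound fun c hc ↦ ?_
  obtain ⟨T, hT⟩ := eventually_atTop.1 (hf.and (hg.and (hg'.and (h.bound (half_pos hc)))))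
  have hderiv : ∀ t ≥ T, |f' t| ≤ c / 2 * g' t := fun t ht ↦ by
    simpa [Real.norm_eq_abs, abs_of_nonneg (hT t ht).2.2.1] using (hT t ht).2.2.2
  have hupper : MonotoneOn (fun t ↦ c / 2 * g t - f t) (Ici T) :=
    monotoneOn_of_hasDerivAt_nonneg (convex_Ici T)
      (fun t ht ↦ ((hT t ht).2.1.const_mul (c / 2)).sub (hT t ht).1)
      fun t ht ↦ by linarith [le_abs_self (f' t), hderiv t (interior_subset ht)]
  have hlower : MonotoneOn (fun t ↦ c / 2 * g t + f t) (Ici T) :=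
    monotoneOn_of_hasDerivAt_nonneg (convex_Ici T)
      (fun t ht ↦ ((hT t ht).2.1.const_mul (c / 2)).add (hT t ht).1)
      fun t ht ↦ by linarith [neg_abs_le (f' t), hderiv t (interior_subset ht)]
  filter_upwards [hg_top.eventually_ge_atTop (2 / c * |f T| + |g T|), eventually_ge_atTop T]
    with t hgt ht
  have h1 := hupper self_mem_Ici ht ht
  have h2 := hlower self_mem_Ici ht ht
  dsimp only at h1 h2
  have hvariation : |f t - f T| ≤ c / 2 * (g t - g T) := abs_le.2 ⟨by linarith, by linarith⟩
  have hfT : |f T| + c / 2 * |g T| ≤ c / 2 * g t := by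
    have hc2 : c / 2 * (2 / c) = 1 := by field_simp
    have := mul_le_mul_of_nonneg_left hgt (half_pos hc).le
    rwa [mul_add, ← mul_assoc, hc2, one_mul] at this
  have hg0 : 0 ≤ g t := le_trans (by positivity) hgt
  rw [Real.norm_eq_abs, Real.norm_eq_abs, abs_of_nonneg hg0]
  calc |f t| ≤ |f T| + |f t - f T| := by linarith [abs_sub_abs_le_abs_sub (f t) (f T)]
    _ ≤ c * g t := by linarith [mul_le_mul_of_nonneg_left (neg_abs_le (g T)) hc.le]

theorem tendsto_sq_mul_of_isLittleO_rpow_neg_two {κ : ℝ → ℝ}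
    (hκ : κ =o[atTop] fun t ↦ t ^ (-2 : ℝ)) : Tendsto (fun t ↦ t ^ 2 * κ t) atTop (nhds 0) := by
  rw [← isLittleO_one_iff ℝ]
  refine ((isBigO_refl (fun t : ℝ ↦ t ^ 2) atTop).mul_isLittleO hκ).congr' .rfl ?_
  filter_upwards [eventually_gt_atTop 0] with t ht
  rw [Real.rpow_neg ht.le, Real.rpow_two, mul_inv_cancel₀ (by positivity)]

structure IsJacobiSolution (κ σ σ' : ℝ → ℝ) : Prop where
  hasDerivAt : ∀ t ∈ Ici (0 : ℝ), HasDerivAt σ (σ' t) t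
  hasDerivAt_deriv : ∀ t ∈ Ici (0 : ℝ), HasDerivAt σ' (κ t * σ t) t
  apply_zero : σ 0 = 0
  deriv_zero : σ' 0 = 1

namespace IsJacobiSolution

variable {κ σ σ' : ℝ → ℝ}

theorem monotoneOn_deriv_Icc (h : IsJacobiSolution κ σ σ') (hκ : ∀ t, 0 ≤ t → 0 ≤ κ t) {b : ℝ}
    (hb : ∀ t ∈ Ioo 0 b, 0 ≤ σ' t) : MonotoneOn σ' (Icc 0 b) := by
  have hσ : MonotoneOn σ (Icc 0 b) :=
    monotoneOn_of_hasDerivAt_nonneg (convex_Icc 0 b) (fun t ht ↦ h.hasDerivAt t ht.1)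
      (by rwa [interior_Icc])
  refine monotoneOn_of_hasDerivAt_nonneg (convex_Icc 0 b)
    (fun t ht ↦ h.hasDerivAt_deriv t ht.1) fun t ht ↦ ?_
  rw [interior_Icc] at ht
  have ht' : t ∈ Icc 0 b := Ioo_subset_Icc_self ht
  refine mul_nonneg (hκ t ht.1.le) ?_
  simpa [h.apply_zero] using hσ (left_mem_Icc.2 (ht.1.le.trans ht'.2)) ht' ht'.1

theorem deriv_pos (h : IsJacobiSolution κ σ σ') (hκ : ∀ t, 0 ≤ t → 0 ≤ κ t) {t : ℝ}
    (ht : 0 ≤ t) : 0 < σ' t := by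
  by_contra! hneg
  set Z := Ici 0 ∩ σ' ⁻¹' Iic 0
  have hZ : IsClosed Z := ContinuousOn.preimage_isClosed_of_isClosed
    (fun s hs ↦ (h.hasDerivAt_deriv s hs).continuousAt.continuousWithinAt) isClosed_Ici isClosed_Iic
  have hbdd : BddBelow Z := ⟨0, fun s hs ↦ hs.1⟩
  obtain ⟨ht₁, hσ't₁⟩ : sInf Z ∈ Z := hZ.csInf_mem ⟨t, ht, hneg⟩ hbdd
  have hbefore : ∀ s ∈ Ioo 0 (sInf Z), 0 ≤ σ' s := fun s hs ↦ by
    by_contra! hs'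
    exact (csInf_le hbdd ⟨hs.1.le, hs'.le⟩).not_gt hs.2
  have := h.monotoneOn_deriv_Icc hκ hbefore (left_mem_Icc.2 ht₁) (right_mem_Icc.2 ht₁) ht₁
  linarith [h.deriv_zero, show σ' (sInf Z) ≤ 0 from hσ't₁]

theorem one_le_deriv (h : IsJacobiSolution κ σ σ') (hκ : ∀ t, 0 ≤ t → 0 ≤ κ t) {t : ℝ}
    (ht : 0 ≤ t) : 1 ≤ σ' t := by
  rw [← h.deriv_zero]
  exact h.monotoneOn_deriv_Icc hκ (fun s hs ↦ (h.deriv_pos hκ hs.1.le).le)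
    (left_mem_Icc.2 ht) (right_mem_Icc.2 ht) ht

theorem self_le_apply (h : IsJacobiSolution κ σ σ') (hκ : ∀ t, 0 ≤ t → 0 ≤ κ t) {t : ℝ}
    (ht : 0 ≤ t) : t ≤ σ t := by
  have : MonotoneOn (fun s ↦ σ s - s) (Ici 0) :=
    monotoneOn_of_hasDerivAt_nonneg (convex_Ici 0)
      (fun s hs ↦ (h.hasDerivAt s hs).sub (hasDerivAt_id s)) fun s hs ↦ by
        linarith [h.one_le_deriv hκ (interior_subset hs : s ∈ Ici 0)]
  simpa [h.apply_zero] using this self_mem_Ici ht ht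

theorem le_mul_deriv (h : IsJacobiSolution κ σ σ') (hκ : ∀ t, 0 ≤ t → 0 ≤ κ t) {t : ℝ}
    (ht : 0 ≤ t) : σ t ≤ t * σ' t := by
  have : MonotoneOn (fun s ↦ s * σ' s - σ s) (Ici 0) :=
    monotoneOn_of_hasDerivAt_nonneg (convex_Ici 0)
      (fun s hs ↦ ((hasDerivAt_id s).mul (h.hasDerivAt_deriv s hs)).sub (h.hasDerivAt s hs))
      fun s hs ↦ by
        rw [interior_Ici] at hs
        have := mul_nonneg hs.le (mul_nonneg (hκ s hs.le) ((h.self_le_apply hκ hs.le).trans' hs.le))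
        simp only [id]
        linarith
  simpa [h.apply_zero] using this self_mem_Ici ht ht

theorem isLittleO_mul_deriv_sub (h : IsJacobiSolution κ σ σ') (hκ : ∀ t, 0 ≤ t → 0 ≤ κ t)
    (hκ_sq : Tendsto (fun t ↦ t ^ 2 * κ t) atTop (nhds 0)) :
    (fun t ↦ t * σ' t - σ t) =o[atTop] σ := by
  have hsmall : (fun t ↦ t ^ 2 * κ t * σ' t) =o[atTop] σ' := by
    simpa using ((isLittleO_one_iff ℝ).2 hκ_sq).mul_isBigO (isBigO_refl σ' atTop)
  refine isLittleO_atTop_of_isLittleO_deriv (f' := fun t ↦ t * (κ t * σ t)) (g' := σ') ?_ ?_ ?_ ?_ ?_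
  · filter_upwards [eventually_ge_atTop 0] with t ht
    exact (((hasDerivAt_id t).mul (h.hasDerivAt_deriv t ht)).sub (h.hasDerivAt t ht)).congr_deriv
      (by simp only [id]; ring)
  · filter_upwards [eventually_ge_atTop 0] with t ht using h.hasDerivAt t ht
  · filter_upwards [eventually_ge_atTop 0] with t ht using (h.deriv_pos hκ ht).le
  · exact tendsto_atTop_mono' atTop (eventually_ge_atTop 0 |>.mono fun t ht ↦ h.self_le_apply hκ ht)
      tendsto_id
  refine IsBigO.trans_isLittleO (IsBigO.of_bound 1 ?_) hsmall
  filter_upwards [eventually_ge_atTop 0] with t ht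
  have hσ := h.le_mul_deriv hκ ht
  have hκt := hκ t ht
  have hσ0 : 0 ≤ σ t := (h.self_le_apply hκ ht).trans' ht
  have hσ'0 := (h.deriv_pos hκ ht).le
  rw [Real.norm_eq_abs, Real.norm_eq_abs, one_mul, abs_of_nonneg (by positivity),
    abs_of_nonneg (by positivity)]
  calc t * (κ t * σ t) ≤ t * (κ t * (t * σ' t)) := by gcongr
    _ = t ^ 2 * κ t * σ' t := by ring

end IsJacobiSolution

theorem stmt3_general (κ σ σ' : ℝ → ℝ)
    (hκnonneg : ∀ t, 0 ≤ t → 0 ≤ κ t)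
    (hκo : (fun t => κ t) =o[atTop] fun t : ℝ => t ^ (-2 : ℝ))
    (hσ : ∀ t ∈ Set.Ici (0:ℝ), HasDerivAt σ (σ' t) t)
    (hσ' : ∀ t ∈ Set.Ici (0:ℝ), HasDerivAt σ' (κ t * σ t) t)
    (hσ0 : σ 0 = 0) (hσ'0 : σ' 0 = 1) :
    Tendsto (fun t => t * σ' t / σ t) atTop (nhds 1) := by
  have h : IsJacobiSolution κ σ σ' := ⟨hσ, hσ', hσ0, hσ'0⟩
  have hsmall := h.isLittleO_mul_deriv_sub hκnonneg (tendsto_sq_mul_of_isLittleO_rpow_neg_two hκo)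
  have hlim : Tendsto (fun t ↦ 1 + (t * σ' t - σ t) / σ t) atTop (nhds 1) := by
    simpa using hsmall.tendsto_div_nhds_zero.const_add 1
  refine hlim.congr' ?_
  filter_upwards [eventually_gt_atTop 0] with t ht
  have hσt : σ t ≠ 0 := ((h.self_le_apply hκnonneg ht.le).trans_lt' ht).ne'
  field_simp
  ring

/-- if `κ : [0,∞) → [0,∞)` is continuous, non-increasing with
`κ(t) = o(t^{-2})` as `t → ∞`, and `σ` solves `σ'' = κ σ`, `σ(0)=0`, `σ'(0)=1`,
then `t σ'(t)/σ(t) → 1` as `t → ∞`. -/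
theorem stmt3 (κ σ σ' : ℝ → ℝ)
    (hκcont : ContinuousOn κ (Set.Ici 0))
    (hκmono : AntitoneOn κ (Set.Ici 0))
    (hκnonneg : ∀ t, 0 ≤ t → 0 ≤ κ t)
    (hκo : (fun t => κ t) =o[atTop] fun t : ℝ => t ^ (-2 : ℝ))
    (hσ : ∀ t ∈ Set.Ici (0:ℝ), HasDerivAt σ (σ' t) t)
    (hσ' : ∀ t ∈ Set.Ici (0:ℝ), HasDerivAt σ' (κ t * σ t) t)
    (hσ0 : σ 0 = 0) (hσ'0 : σ' 0 = 1) :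
    Tendsto (fun t => t * σ' t / σ t) atTop (nhds 1) :=
  stmt3_general κ σ σ' hκnonneg hκo hσ hσ' hσ0 hσ'0
end

section
/- Let κ : [0,∞) → [0,∞) be non-increasing with b₀ := ∫_0^∞ t κ(t) dt < ∞, and let j solve j'' = κ j, j(0)=0, j'(0)=1, j > 0 on (0,∞). Then ∫_0^∞ j(s) κ(s) ds ≤ b₀ e^{b₀}. -/
open MeasureTheory

/-!
Since `κ, j ≥ 0`, `j'` is non-decreasing, so `j' ≥ 1` and `j(t) ≤ t j'(t)`. Hence
`(log j')' = κ j / j' ≤ t κ`, which integrates to `j' ≤ e^{b₀}`. Integrating `j'' = κ j` then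
gives `∫_0^T j κ = j'(T) - 1 ≤ e^{b₀} - 1 ≤ b₀ e^{b₀}`.
-/

open Set Real

theorem Real.exp_sub_one_le_mul_exp (x : ℝ) : exp x - 1 ≤ x * exp x := by
  have h := one_sub_inv_le_log_of_pos (exp_pos x)
  rw [log_exp] at h
  have h' := mul_le_mul_of_nonneg_right h (exp_pos x).le
  rwa [sub_mul, inv_mul_cancel₀ (exp_pos x).ne', one_mul] at h'

theorem monotoneOn_Ici_of_hasDerivAt {f f' : ℝ → ℝ} {a : ℝ}
    (hf : ∀ t ∈ Ici a, HasDerivAt f (f' t) t) (hf' : ∀ t ∈ Ioi a, 0 ≤ f' t) :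
    MonotoneOn f (Ici a) :=
  monotoneOn_of_hasDerivWithinAt_nonneg (convex_Ici a)
    (fun t ht => (hf t ht).continuousAt.continuousWithinAt)
    (fun t ht => (hf t (interior_subset ht)).hasDerivWithinAt)
    (by simpa only [interior_Ici] using hf')

theorem setIntegral_Ici_le_of_intervalIntegral_le {f : ℝ → ℝ} {a C : ℝ} (hC : 0 ≤ C)
    (h : ∀ T, a ≤ T → ∫ x in a..T, f x ≤ C) : ∫ x in Ici a, f x ≤ C := by
  by_cases hf : IntegrableOn f (Ici a)
  · rw [integral_Ici_eq_integral_Ioi]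
    exact le_of_tendsto
      (intervalIntegral_tendsto_integral_Ioi a (hf.mono_set Ioi_subset_Ici_self) Filter.tendsto_id)
      (Filter.eventually_atTop.2 ⟨a, h⟩)
  · rwa [integral_undef hf]

section JacobiEquation

variable {κ j j' : ℝ → ℝ}
  (hκ : ∀ t, 0 ≤ t → 0 ≤ κ t)
  (hj : ∀ t ∈ Ici (0:ℝ), HasDerivAt j (j' t) t)
  (hj' : ∀ t ∈ Ici (0:ℝ), HasDerivAt j' (κ t * j t) t)
  (hj0 : j 0 = 0) (hj'0 : j' 0 = 1)
  (hjnonneg : ∀ t, 0 ≤ t → 0 ≤ j t)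

include hj hj' hj'0 in
theorem integral_mul_eq_deriv_sub_one_of_jacobi {T : ℝ} (hT : 0 ≤ T)
    (hκT : IntervalIntegrable κ volume 0 T) : ∫ t in (0:ℝ)..T, j t * κ t = j' T - 1 := by
  have hsub : uIcc 0 T ⊆ Ici (0:ℝ) := by rw [uIcc_of_le hT]; exact Icc_subset_Ici_self
  simp_rw [mul_comm (j _)]
  rw [intervalIntegral.integral_eq_sub_of_hasDerivAt (fun t ht => hj' t (hsub ht))
    (hκT.mul_continuousOn fun t ht => (hj t (hsub ht)).continuousAt.continuousWithinAt), hj'0]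

include hκ hj' hjnonneg

theorem monotoneOn_deriv_of_jacobi : MonotoneOn j' (Ici 0) :=
  monotoneOn_Ici_of_hasDerivAt hj' fun t ht =>
    mul_nonneg (hκ t ht.le) (hjnonneg t ht.le)

include hj'0 in
theorem one_le_deriv_of_jacobi {t : ℝ} (ht : 0 ≤ t) : 1 ≤ j' t :=
  hj'0 ▸ monotoneOn_deriv_of_jacobi hκ hj' hjnonneg self_mem_Ici ht ht

include hj hj0 in
theorem le_mul_deriv_of_jacobi {t : ℝ} (ht : 0 ≤ t) : j t ≤ t * j' t := by
  have hmono : MonotoneOn (fun t => t * j' t - j t) (Ici 0) := by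
    refine monotoneOn_Ici_of_hasDerivAt
      (fun t ht => ((hasDerivAt_id t).mul (hj' t ht)).sub (hj t ht)) fun t ht => ?_
    have := mul_nonneg ht.le (mul_nonneg (hκ t ht.le) (hjnonneg t ht.le))
    simpa using this
  have := hmono self_mem_Ici ht ht
  simp only [hj0, zero_mul, sub_zero] at this
  linarith

include hj hj0 hj'0 in
theorem deriv_le_exp_integral_of_jacobi {T : ℝ} (hT : 0 ≤ T)
    (hκT : IntervalIntegrable κ volume 0 T) : j' T ≤ exp (∫ t in (0:ℝ)..T, t * κ t) := by
  have hsub : uIcc 0 T ⊆ Ici (0:ℝ) := by rw [uIcc_of_le hT]; exact Icc_subset_Ici_self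
  have hj'pos : ∀ t ∈ uIcc 0 T, 0 < j' t := fun t ht =>
    one_pos.trans_le (one_le_deriv_of_jacobi hκ hj' hj'0 hjnonneg (hsub ht))
  have hlog : ∀ t ∈ uIcc 0 T, HasDerivAt (fun s => log (j' s)) (κ t * j t / j' t) t :=
    fun t ht => (hj' t (hsub ht)).log (hj'pos t ht).ne'
  have hquot : IntervalIntegrable (fun t => κ t * j t / j' t) volume 0 T := by
    refine (hκT.mul_continuousOn (ContinuousOn.div (f := j) ?_ ?_ fun t ht => (hj'pos t ht).ne'))
      |>.congr fun t _ => (mul_div_assoc _ _ _).symm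
    · exact fun t ht => (hj t (hsub ht)).continuousAt.continuousWithinAt
    · exact fun t ht => (hj' t (hsub ht)).continuousAt.continuousWithinAt
  have hmoment : IntervalIntegrable (fun t => t * κ t) volume 0 T :=
    hκT.continuousOn_mul continuousOn_id
  have hintegral : log (j' T) ≤ ∫ t in (0:ℝ)..T, t * κ t := by
    have hftc := intervalIntegral.integral_eq_sub_of_hasDerivAt hlog hquot
    rw [hj'0, log_one, sub_zero] at hftc
    rw [← hftc]
    refine intervalIntegral.integral_mono_on hT hquot hmoment fun t ht => ?_
    have ht0 : 0 ≤ t := ht.1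
    rw [div_le_iff₀ (hj'pos t (Icc_subset_uIcc ht)), mul_assoc, mul_left_comm t]
    exact mul_le_mul_of_nonneg_left (le_mul_deriv_of_jacobi hκ hj hj' hj0 hjnonneg ht0) (hκ t ht0)
  calc j' T = exp (log (j' T)) := (exp_log (hj'pos T right_mem_uIcc)).symm
    _ ≤ _ := exp_le_exp.2 hintegral

end JacobiEquation

/-- with `κ` non-increasing, non-negative, of finite first moment
`b₀ = ∫_0^∞ t κ(t) dt`, and `j` the solution of `j'' = κ j`, `j(0)=0`, `j'(0)=1`,
`j > 0` on `(0,∞)`, one has `∫_0^∞ j(s) κ(s) ds ≤ b₀ e^{b₀}`. -/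
theorem stmt4 (κ j j' : ℝ → ℝ)
    (hκmono : AntitoneOn κ (Set.Ici 0))
    (hκnonneg : ∀ t, 0 ≤ t → 0 ≤ κ t)
    (hκint : IntegrableOn (fun t => t * κ t) (Set.Ici 0))
    (hj : ∀ t ∈ Set.Ici (0:ℝ), HasDerivAt j (j' t) t)
    (hj' : ∀ t ∈ Set.Ici (0:ℝ), HasDerivAt j' (κ t * j t) t)
    (hj0 : j 0 = 0) (hj'0 : j' 0 = 1)
    (hjpos : ∀ t : ℝ, 0 < t → 0 < j t) :
    ∫ s in Set.Ici (0:ℝ), j s * κ s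
      ≤ (∫ s in Set.Ici (0:ℝ), s * κ s) * Real.exp (∫ s in Set.Ici (0:ℝ), s * κ s) := by
  set b := ∫ s in Set.Ici (0:ℝ), s * κ s
  have hjnonneg : ∀ t, 0 ≤ t → 0 ≤ j t := fun t ht => by
    rcases ht.eq_or_lt with rfl | ht
    exacts [hj0.ge, (hjpos t ht).le]
  have hb : 0 ≤ b :=
    setIntegral_nonneg measurableSet_Ici fun t ht => mul_nonneg ht (hκnonneg t ht)
  refine (setIntegral_Ici_le_of_intervalIntegral_le (sub_nonneg.2 (one_le_exp hb))
    fun T hT => ?_).trans (exp_sub_one_le_mul_exp b)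
  have hκT : IntervalIntegrable κ volume 0 T :=
    (hκmono.mono (by rw [uIcc_of_le hT]; exact Icc_subset_Ici_self)).intervalIntegrable
  have hmoment : ∫ t in (0:ℝ)..T, t * κ t ≤ b := by
    rw [intervalIntegral.integral_of_le hT]
    exact setIntegral_mono_set hκint
      (ae_restrict_of_forall_mem measurableSet_Ici fun t ht => mul_nonneg ht (hκnonneg t ht))
      (Filter.Eventually.of_forall fun t ht => ht.1.le)
  rw [integral_mul_eq_deriv_sub_one_of_jacobi hj hj' hj'0 hT hκT, sub_le_sub_iff_right]
  exact (deriv_le_exp_integral_of_jacobi hκnonneg hj hj' hj0 hj'0 hjnonneg hT hκT).trans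
    (exp_le_exp.2 hmoment)
end
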